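/- For every k ≥ 1, the k-th power I^k of the ideal I equals the ideal of ℝ[z₁,z₂] generated by the finite set of three-directional box spline symbols I_k = { B#_{β,β,α}, B#_{β,α,β}, B#_{α,β,β} : α = 0, 1, …, ⌊k/2⌋, β = k − α }. -/

import Mathlib

open MvPolynomial

/-- The ideal of bivariate real polynomials vanishing at the three points
`(−1,−1), (−1,1), (1,−1)`. -/
noncomputable def vI : Ideal (MvPolynomial (Fin 2) ℝ) where
  carrier := {p | ∀ ε ∈ ({![-1, -1], ![-1, 1], ![1, -1]} : Set (Fin 2 → ℝ)), eval ε p = 0}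
  zero_mem' := by intro ε _; simp
  add_mem' := by intro a b ha hb ε hε; simp [ha ε hε, hb ε hε]
  smul_mem' := by intro c p hp ε hε; simp [smul_eq_mul, hp ε hε]

/-- The normalized three-directional box spline symbol
`B#_{α,β,γ}(z₁,z₂) = ((1+z₁)/2)^α ((1+z₂)/2)^β ((1+z₁z₂)/2)^γ`. -/
noncomputable def Bs (α β γ : ℕ) : MvPolynomial (Fin 2) ℝ :=
  (C (1 / 2 : ℝ) * (1 + X 0)) ^ α * (C (1 / 2 : ℝ) * (1 + X 1)) ^ β *
    (C (1 / 2 : ℝ) * (1 + X 0 * X 1)) ^ γ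

/-- The generating set `I_k = { B#_{β,β,α}, B#_{β,α,β}, B#_{α,β,β} :
α = 0,…,⌊k/2⌋, β = k − α }`. -/
def Iset (k : ℕ) : Set (MvPolynomial (Fin 2) ℝ) :=
  {q | ∃ α : ℕ, α ≤ k / 2 ∧
    (q = Bs (k - α) (k - α) α ∨ q = Bs (k - α) α (k - α) ∨ q = Bs α (k - α) (k - α))}

/-!
Write `a, b, c` for the three factors `(1+z₁)/2, (1+z₂)/2, (1+z₁z₂)/2`, so that
`B#_{A,B,D} = a^A b^B c^D`. At the three points of `Z'` exactly two of `a, b, c` vanish, so `I`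
contains `ab, ac, bc`; conversely these three generate `I`, since modulo them every polynomial
reduces to an affine one `c₀ + c₁z₁ + c₂z₂`, which vanishes on `Z'` only if it is zero.
Hence `I^k` is spanned by the symbols `a^A b^B c^D` whose exponents pairwise sum to at least `k`.
Each of them is a multiple of a symbol in `I_k`, and conversely the symbols in `I_k` lie in `I^k`
because `abc ∈ I²`.
-/

namespace BoxSpline

open scoped Pointwise

def triSet (k : ℕ) : Set (MvPolynomial (Fin 2) ℝ) :=
  {q | ∃ A B D : ℕ, k ≤ A + B ∧ k ≤ A + D ∧ k ≤ B + D ∧ q = Bs A B D}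

lemma Bs_mul_Bs (A B D A' B' D' : ℕ) :
    Bs A B D * Bs A' B' D' = Bs (A + A') (B + B') (D + D') := by
  simp only [Bs, pow_add]; ring

lemma Bs_dvd_Bs {A B D A' B' D' : ℕ} (hA : A ≤ A') (hB : B ≤ B') (hD : D ≤ D') :
    Bs A B D ∣ Bs A' B' D' := by
  obtain ⟨a, rfl⟩ := Nat.exists_eq_add_of_le hA
  obtain ⟨b, rfl⟩ := Nat.exists_eq_add_of_le hB
  obtain ⟨d, rfl⟩ := Nat.exists_eq_add_of_le hD
  exact ⟨Bs a b d, (Bs_mul_Bs ..).symm⟩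

lemma Bs_pow (A B D n : ℕ) : Bs A B D ^ n = Bs (A * n) (B * n) (D * n) := by
  simp only [Bs, mul_pow, pow_mul]

lemma triSet_mul_subset (k m : ℕ) : triSet k * triSet m ⊆ triSet (k + m) := by
  rintro _ ⟨_, ⟨A, B, D, h₁, h₂, h₃, rfl⟩, _, ⟨A', B', D', h₁', h₂', h₃', rfl⟩, rfl⟩
  exact ⟨A + A', B + B', D + D', by omega, by omega, by omega, Bs_mul_Bs ..⟩

lemma Bs_mem_vI {A B D : ℕ} (hAB : 1 ≤ A + B) (hAD : 1 ≤ A + D) (hBD : 1 ≤ B + D) :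
    Bs A B D ∈ vI := by
  intro ε hε
  simp only [Set.mem_insert_iff, Set.mem_singleton_iff] at hε
  rcases hε with rfl | rfl | rfl <;> simp [Bs] <;> omega

lemma Bs_one_one_one_mem_vI_sq : Bs 1 1 1 ∈ vI ^ 2 := by
  have hab : Bs 1 1 0 ∈ vI := Bs_mem_vI (by norm_num) (by norm_num) (by norm_num)
  have hac : Bs 1 0 1 ∈ vI := Bs_mem_vI (by norm_num) (by norm_num) (by norm_num)
  have hbc : Bs 0 1 1 ∈ vI := Bs_mem_vI (by norm_num) (by norm_num) (by norm_num)
  -- a consequence of `2ab = a + b + c - 1`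
  have h : Bs 1 1 1 = Bs 1 1 0 * Bs 1 0 1 + Bs 1 1 0 * Bs 0 1 1 + Bs 1 0 1 * Bs 0 1 1
      - 2 * Bs 0 0 1 * Bs 1 1 0 * Bs 1 1 0 := by
    apply MvPolynomial.funext; intro x; simp [Bs]; ring
  rw [h, sq]
  exact sub_mem (add_mem (add_mem (Ideal.mul_mem_mul hab hac) (Ideal.mul_mem_mul hab hbc))
    (Ideal.mul_mem_mul hac hbc)) (Ideal.mul_mem_mul (Ideal.mul_mem_left _ _ hab) hab)

lemma triSet_one_subset_vI : triSet 1 ⊆ vI := by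
  rintro _ ⟨A, B, D, h₁, h₂, h₃, rfl⟩
  exact Bs_mem_vI h₁ h₂ h₃

def pairProducts : Set (MvPolynomial (Fin 2) ℝ) := {Bs 1 1 0, Bs 1 0 1, Bs 0 1 1}

lemma pairProducts_subset_triSet_one : pairProducts ⊆ triSet 1 := by
  simp only [pairProducts, Set.insert_subset_iff, Set.singleton_subset_iff]
  exact ⟨⟨1, 1, 0, by norm_num⟩, ⟨1, 0, 1, by norm_num⟩, ⟨0, 1, 1, by norm_num⟩⟩

lemma exists_affine_sub_mem_span (p : MvPolynomial (Fin 2) ℝ) :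
    ∃ c₀ c₁ c₂ : ℝ, p - (C c₀ + C c₁ * X 0 + C c₂ * X 1) ∈
      Ideal.span pairProducts := by
  set J := Ideal.span pairProducts
  have hab : Bs 1 1 0 ∈ J := Ideal.subset_span (by simp [pairProducts])
  have hac : Bs 1 0 1 ∈ J := Ideal.subset_span (by simp [pairProducts])
  have hbc : Bs 0 1 1 ∈ J := Ideal.subset_span (by simp [pairProducts])
  induction p using MvPolynomial.induction_on with
  | C a => exact ⟨a, 0, 0, by simp⟩
  | add p q hp hq =>
    obtain ⟨c₀, c₁, c₂, hp⟩ := hp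
    obtain ⟨d₀, d₁, d₂, hq⟩ := hq
    refine ⟨c₀ + d₀, c₁ + d₁, c₂ + d₂, ?_⟩
    convert add_mem hp hq using 1
    simp only [map_add]; ring
  | mul_X p i hp =>
    obtain ⟨c₀, c₁, c₂, hp⟩ := hp
    -- `z₁² ≡ 1`, `z₂² ≡ 1` and `z₁z₂ ≡ -1 - z₁ - z₂` modulo `J`
    fin_cases i
    · refine ⟨c₁ - c₂, c₀ - c₂, -c₂, ?_⟩
      convert add_mem (add_mem (J.mul_mem_right (X 0) hp)
        (J.mul_mem_left (C c₁ * (4 * X 0) + 4 * C c₂) hab)) (J.mul_mem_left (-4 * C c₁) hac)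
        using 1
      apply MvPolynomial.funext; intro x; simp [Bs]; ring
    · refine ⟨c₂ - c₁, -c₁, c₀ - c₁, ?_⟩
      convert add_mem (add_mem (J.mul_mem_right (X 1) hp)
        (J.mul_mem_left (C c₂ * (4 * X 1) + 4 * C c₁) hab)) (J.mul_mem_left (-4 * C c₂) hbc)
        using 1
      apply MvPolynomial.funext; intro x; simp [Bs]; ring

lemma vI_le_span_pairProducts : vI ≤ Ideal.span pairProducts := by
  intro p hp
  obtain ⟨c₀, c₁, c₂, hm⟩ := exists_affine_sub_mem_span p
  have hspan : Ideal.span pairProducts ≤ vI :=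
    Ideal.span_le.2 (pairProducts_subset_triSet_one.trans triSet_one_subset_vI)
  have hvan : ∀ ε ∈ ({![-1, -1], ![-1, 1], ![1, -1]} : Set (Fin 2 → ℝ)),
      eval ε (C c₀ + C c₁ * X 0 + C c₂ * X 1) = 0 := fun ε hε ↦ by
    have h := hspan hm ε hε
    rwa [map_sub, hp ε hε, zero_sub, neg_eq_zero] at h
  have h₁ := hvan ![-1, -1] (by simp)
  have h₂ := hvan ![-1, 1] (by simp)
  have h₃ := hvan ![1, -1] (by simp)
  simp at h₁ h₂ h₃
  obtain ⟨rfl, rfl, rfl⟩ : c₀ = 0 ∧ c₁ = 0 ∧ c₂ = 0 := ⟨by linarith, by linarith, by linarith⟩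
  simpa using hm

lemma vI_eq_span_triSet_one : vI = Ideal.span (triSet 1) :=
  le_antisymm (vI_le_span_pairProducts.trans (Ideal.span_mono pairProducts_subset_triSet_one))
    (Ideal.span_le.2 triSet_one_subset_vI)

lemma span_triSet_one_pow_le (k : ℕ) :
    Ideal.span (triSet 1) ^ k ≤ Ideal.span (triSet k) := by
  induction k with
  | zero =>
    rw [pow_zero, Ideal.one_eq_top, top_le_iff, Ideal.eq_top_iff_one]
    exact Ideal.subset_span ⟨0, 0, 0, le_rfl, le_rfl, le_rfl, by simp [Bs]⟩
  | succ k ih =>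
    calc Ideal.span (triSet 1) ^ (k + 1)
        = Ideal.span (triSet 1) ^ k * Ideal.span (triSet 1) := pow_succ _ _
      _ ≤ Ideal.span (triSet k) * Ideal.span (triSet 1) := Ideal.mul_mono_left ih
      _ = Ideal.span (triSet k * triSet 1) := Ideal.span_mul_span' _ _
      _ ≤ Ideal.span (triSet (k + 1)) := Ideal.span_mono (triSet_mul_subset k 1)

lemma triSet_subset_span_Iset (k : ℕ) : triSet k ⊆ Ideal.span (Iset k) := by
  rintro _ ⟨A, B, D, hAB, hAD, hBD, rfl⟩
  have hgen : ∀ α ≤ k / 2, Bs (k - α) (k - α) α ∈ Ideal.span (Iset k) ∧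
      Bs (k - α) α (k - α) ∈ Ideal.span (Iset k) ∧ Bs α (k - α) (k - α) ∈ Ideal.span (Iset k) :=
    fun α hα ↦ ⟨Ideal.subset_span ⟨α, hα, Or.inl rfl⟩,
      Ideal.subset_span ⟨α, hα, Or.inr (Or.inl rfl)⟩, Ideal.subset_span ⟨α, hα, Or.inr (Or.inr rfl)⟩⟩
  -- the generator carries `α` in the slot of the smallest exponent
  rcases (by omega : (D ≤ A ∧ D ≤ B) ∨ (B ≤ A ∧ B ≤ D) ∨ (A ≤ B ∧ A ≤ D)) with h | h | h
  · exact Ideal.mem_of_dvd _ (Bs_dvd_Bs (by omega) (by omega) (by omega))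
      (hgen (k - min A B) (by omega)).1
  · exact Ideal.mem_of_dvd _ (Bs_dvd_Bs (by omega) (by omega) (by omega))
      (hgen (k - min A D) (by omega)).2.1
  · exact Ideal.mem_of_dvd _ (Bs_dvd_Bs (by omega) (by omega) (by omega))
      (hgen (k - min B D) (by omega)).2.2

lemma Iset_subset_vI_pow (k : ℕ) : Iset k ⊆ (vI ^ k : Ideal (MvPolynomial (Fin 2) ℝ)) := by
  rintro q ⟨α, hα, hq⟩
  obtain ⟨e, rfl⟩ : ∃ e, k = e + 2 * α := ⟨k - 2 * α, by omega⟩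
  rw [show e + 2 * α - α = e + α by omega] at hq
  have hmem : ∀ x ∈ vI, x ^ e * Bs 1 1 1 ^ α ∈ vI ^ (e + 2 * α) := fun x hx ↦ by
    rw [pow_add, pow_mul]
    exact Ideal.mul_mem_mul (Ideal.pow_mem_pow hx e) (Ideal.pow_mem_pow Bs_one_one_one_mem_vI_sq α)
  rcases hq with rfl | rfl | rfl
  · rw [show Bs (e + α) (e + α) α = Bs 1 1 0 ^ e * Bs 1 1 1 ^ α by
      rw [Bs_pow, Bs_pow, Bs_mul_Bs]; simp]
    exact hmem _ (Bs_mem_vI (by norm_num) (by norm_num) (by norm_num))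
  · rw [show Bs (e + α) α (e + α) = Bs 1 0 1 ^ e * Bs 1 1 1 ^ α by
      rw [Bs_pow, Bs_pow, Bs_mul_Bs]; simp]
    exact hmem _ (Bs_mem_vI (by norm_num) (by norm_num) (by norm_num))
  · rw [show Bs α (e + α) (e + α) = Bs 0 1 1 ^ e * Bs 1 1 1 ^ α by
      rw [Bs_pow, Bs_pow, Bs_mul_Bs]; simp]
    exact hmem _ (Bs_mem_vI (by norm_num) (by norm_num) (by norm_num))

end BoxSpline

open BoxSpline in
theorem stmt_11_general (k : ℕ) : vI ^ k = Ideal.span (Iset k) := by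
  refine le_antisymm ?_ (Ideal.span_le.2 (Iset_subset_vI_pow k))
  calc vI ^ k = Ideal.span (triSet 1) ^ k := by rw [vI_eq_span_triSet_one]
    _ ≤ Ideal.span (triSet k) := span_triSet_one_pow_le k
    _ ≤ Ideal.span (Iset k) := Ideal.span_le.2 (triSet_subset_span_Iset k)

/-- For every `k ≥ 1`, the `k`-th power of the vanishing ideal `I` is generated by the set
`I_k` of three-directional box spline symbols. -/
theorem stmt_11 (k : ℕ) (hk : 1 ≤ k) : vI ^ k = Ideal.span (Iset k) :=
  stmt_11_general k
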